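/- If H is a multigraph that is not Mengerian for time and H is an m-topological minor of a multigraph G, then G is not Mengerian for time. -/

import Mathlib

/-- A (finite, loopless) multigraph: a vertex type, an edge type, and an
endpoints function assigning to each edge an unordered pair of distinct vertices. -/
structure Multigraph where
  V : Type
  E : Type
  fintypeV : Fintype V
  decEqV : DecidableEq V
  fintypeE : Fintype E
  decEqE : DecidableEq E
  ends : E → Sym2 V
  loopless : ∀ e, ¬ (ends e).IsDiag

attribute [instance] Multigraph.fintypeV Multigraph.decEqV Multigraph.fintypeE Multigraph.decEqE

/-- A temporal `s,z`-path in the temporal graph `(G, lam)`: an alternating sequence of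
pairwise distinct vertices and edges, starting at `s`, ending at `z`, whose edges appear
at non-decreasing timesteps. -/
structure TPath (G : Multigraph) (lam : G.E → ℕ) (s z : G.V) where
  verts : List G.V
  edges : List G.E
  len_eq : verts.length = edges.length + 1
  head_eq : verts.head? = some s
  last_eq : verts.getLast? = some z
  nodup : verts.Nodup
  ends_eq : ∀ (i : ℕ) (h : i < edges.length),
      G.ends (edges.get ⟨i, h⟩) = s(verts.get ⟨i, by omega⟩, verts.get ⟨i + 1, by omega⟩)
  mono : List.Chain' (· ≤ ·) (edges.map lam)

/-- The set of timesteps at which a temporal path is active. -/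
def TPath.times {G : Multigraph} {lam : G.E → ℕ} {s z : G.V} (P : TPath G lam s z) : Set ℕ :=
  {t | ∃ e ∈ P.edges, lam e = t}

/-- Two temporal `s,z`-paths are snapshot disjoint if they are not both active at any
common timestep. -/
def SnapDisjoint {G : Multigraph} {lam : G.E → ℕ} {s z : G.V} (P Q : TPath G lam s z) : Prop :=
  P.times ∩ Q.times = ∅

/-- A set `S` of timesteps is a snapshot `s,z`-cut if every temporal `s,z`-path uses an
edge active at some timestep in `S`. -/
def IsSnapCut (G : Multigraph) (lam : G.E → ℕ) (s z : G.V) (S : Set ℕ) : Prop :=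
  ∀ P : TPath G lam s z, ∃ e ∈ P.edges, lam e ∈ S

/-- `maxD G lam s z`: the maximum number of pairwise snapshot disjoint temporal `s,z`-paths. -/
noncomputable def maxD (G : Multigraph) (lam : G.E → ℕ) (s z : G.V) : ℕ :=
  sSup {k | ∃ f : Fin k → TPath G lam s z, ∀ i j, i ≠ j → SnapDisjoint (f i) (f j)}

/-- `minC G lam s z`: the minimum size of a snapshot `s,z`-cut. -/
noncomputable def minC (G : Multigraph) (lam : G.E → ℕ) (s z : G.V) : ℕ :=
  sInf {h | ∃ S : Finset ℕ, S.card = h ∧ IsSnapCut G lam s z ↑S}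

/-- A proper timefunction: each edge is active at a positive timestep, and no two parallel
edges are active at the same timestep. -/
def ProperTime (G : Multigraph) (lam : G.E → ℕ) : Prop :=
  (∀ e, 0 < lam e) ∧ ∀ e f, e ≠ f → G.ends e = G.ends f → lam e ≠ lam f

/-- `G` is Mengerian for time: for every proper timefunction and every pair of distinct
vertices, the maximum number of pairwise snapshot disjoint temporal `s,z`-paths equals the
minimum size of a snapshot `s,z`-cut. -/
def Mengerian (G : Multigraph) : Prop :=
  ∀ lam : G.E → ℕ, ProperTime G lam → ∀ s z : G.V, s ≠ z →
    maxD G lam s z = minC G lam s z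

/-- `H` is a subgraph of `G` (up to isomorphism): `H` embeds into `G`. -/
def IsSubgraph (H G : Multigraph) : Prop :=
  ∃ (fv : H.V → G.V) (fe : H.E → G.E),
    Function.Injective fv ∧ Function.Injective fe ∧
    ∀ e, G.ends (fe e) = (H.ends e).map fv

/-- The m-subdivision of the multiedge `xy` of `G`: delete all edges between `x` and `y`,
add a new vertex (`none`), and join it to each of `x` and `y` by as many parallel edges as
there were between `x` and `y`. -/
def Multigraph.msubdiv (G : Multigraph) (x y : G.V) : Multigraph where
  V := Option G.V
  E := {e : G.E // G.ends e ≠ s(x, y)} ⊕ ({e : G.E // G.ends e = s(x, y)} × Bool)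
  fintypeV := inferInstance
  decEqV := inferInstance
  fintypeE := inferInstance
  decEqE := inferInstance
  ends := fun t =>
    match t with
    | .inl e => (G.ends e.1).map some
    | .inr (_, true) => s(some x, (none : Option G.V))
    | .inr (_, false) => s((none : Option G.V), some y)
  loopless := by
    rintro (⟨e, he⟩ | ⟨e, b⟩)
    · simpa [Sym2.isDiag_map (Option.some_injective _)] using G.loopless e
    · cases b <;> simp [Sym2.mk_isDiag_iff]

/-- Isomorphism of multigraphs. -/
def MIso (G H : Multigraph) : Prop :=
  ∃ (fv : G.V ≃ H.V) (fe : G.E ≃ H.E), ∀ e, H.ends (fe e) = (G.ends e).map fv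

/-- `B` is obtained from `A` by m-subdividing one of its multiedges. -/
def SubdivStep (A B : Multigraph) : Prop :=
  ∃ x y : A.V, (∃ e, A.ends e = s(x, y)) ∧ MIso (A.msubdiv x y) B

/-- `H` is an m-topological minor of `G`: some subgraph of `G` can be obtained from `H` by
a sequence of m-subdivisions. -/
def IsMTopMinor (H G : Multigraph) : Prop :=
  ∃ K, Relation.ReflTransGen SubdivStep H K ∧ IsSubgraph K G

/-- The multigraph obtained from `G` by keeping only the edges satisfying `P`. -/
def Multigraph.restrictE (G : Multigraph) (P : G.E → Prop) [DecidablePred P] : Multigraph where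
  V := G.V
  E := {e : G.E // P e}
  fintypeV := G.fintypeV
  decEqV := G.decEqV
  fintypeE := inferInstance
  decEqE := inferInstance
  ends := fun e => G.ends e.1
  loopless := fun e => G.loopless e.1

/-- The underlying simple graph of a multigraph. -/
def Multigraph.simple (G : Multigraph) : SimpleGraph G.V where
  Adj u v := ∃ e, G.ends e = s(u, v)
  symm := by
    constructor
    rintro u v ⟨e, he⟩
    exact ⟨e, by rw [he, Sym2.eq_swap]⟩
  loopless := by
    constructor
    rintro u ⟨e, he⟩
    exact G.loopless e (by rw [he]; exact Sym2.mk_isDiag_iff.2 rfl)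


/-!
Being Mengerian for time passes to subgraphs, and from the m-subdivision of a multiedge back to
the multigraph itself; the theorem is the contrapositive. In each case a proper time function on
the smaller graph is carried over to the larger one so that temporal paths can be moved in both
directions without picking up new timesteps; snapshot cuts then pull back and snapshot disjoint
families push forward, so `maxD = minC` transfers.

In the m-subdivision, a path crossing the multiedge `xy` along `e` is rerouted through the new
vertex along the two copies of `e`, both active at the timestep of `e`; conversely a detour
through the new vertex is shortcut by the edge underlying its first half.

Subgraphs are reached by deleting edges one at a time. An edge `e₀` is deleted by making it
unusable: it becomes active after all other edges if it misses `z`, and before all of them (after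
shifting time by one) if it misses `s`. If `e₀` joins `s` and `z`, it gets a fresh timestep
instead: deleting it then lowers `maxD` by at most one and `minC` by at least one, which together
with weak duality `maxD ≤ minC` suffices.
-/

attribute [reducible] Multigraph.restrictE Multigraph.msubdiv

namespace Multigraph

variable {G : Multigraph}

def IsWalk (G : Multigraph) : List G.V → List G.E → Prop
  | [_], [] => True
  | u :: v :: vs, e :: es => G.ends e = s(u, v) ∧ G.IsWalk (v :: vs) es
  | _, _ => False

theorem isWalk_iff {vs : List G.V} {es : List G.E} :
    G.IsWalk vs es ↔ ∃ h : vs.length = es.length + 1,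
      ∀ (i : ℕ) (hi : i < es.length), G.ends es[i] = s(vs[i], vs[i + 1]) := by
  induction es generalizing vs with
  | nil => match vs with
    | [] | [_] | _ :: _ :: _ => simp [IsWalk]
  | cons e es ih => match vs with
    | [] | [_] => simp [IsWalk]
    | u :: v :: vs =>
      simp only [IsWalk, ih, List.length_cons, add_left_inj]
      constructor
      · rintro ⟨he, hlen, h⟩
        refine ⟨hlen, fun i hi => ?_⟩
        cases i with
        | zero => exact he
        | succ i => exact h i (by simpa using hi)
      · rintro ⟨hlen, h⟩
        exact ⟨h 0 (by simp), hlen, fun i hi => h (i + 1) (by simpa using hi)⟩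

theorem IsWalk.mem_of_mem_ends {vs : List G.V} {es : List G.E} (hw : G.IsWalk vs es)
    {e : G.E} (he : e ∈ es) {v : G.V} (hv : v ∈ G.ends e) : v ∈ vs := by
  obtain ⟨hlen, h⟩ := isWalk_iff.1 hw
  obtain ⟨i, hi, rfl⟩ := List.getElem_of_mem he
  rw [h i hi, Sym2.mem_iff] at hv
  rcases hv with rfl | rfl <;> exact List.getElem_mem _

theorem IsWalk.nodup_edges {vs : List G.V} {es : List G.E} (hw : G.IsWalk vs es)
    (hnd : vs.Nodup) : es.Nodup := by
  induction es generalizing vs with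
  | nil => exact List.nodup_nil
  | cons e es ih => match vs, hw with
    | u :: v :: vs, ⟨he, hw⟩ =>
      refine List.nodup_cons.2 ⟨fun hmem => ?_, ih hw (List.nodup_cons.1 hnd).2⟩
      exact (List.nodup_cons.1 hnd).1 (hw.mem_of_mem_ends hmem (by simp [he]))

structure Hom (A B : Multigraph) where
  onV : A.V → B.V
  onE : A.E → B.E
  ends_onE : ∀ e, B.ends (onE e) = (A.ends e).map onV

theorem IsWalk.map {A B : Multigraph} (f : A.Hom B) {vs : List A.V} {es : List A.E}
    (hw : A.IsWalk vs es) : B.IsWalk (vs.map f.onV) (es.map f.onE) := by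
  induction es generalizing vs with
  | nil => match vs, hw with
    | [_], _ => trivial
  | cons e es ih => match vs, hw with
    | u :: v :: vs, ⟨he, hw⟩ => exact ⟨by rw [f.ends_onE, he, Sym2.map_mk], ih hw⟩

abbrev inclusion (G : Multigraph) (Q : G.E → Prop) [DecidablePred Q] :
    (G.restrictE Q).Hom G :=
  ⟨id, Subtype.val, fun e => by rw [Sym2.map_id, id]⟩

theorem IsWalk.exists_mem_ends {vs : List G.V} {es : List G.E} (hw : G.IsWalk vs es)
    (hes : es ≠ []) {v : G.V} (hv : v ∈ vs) : ∃ e ∈ es, v ∈ G.ends e := by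
  induction es generalizing vs with
  | nil => exact absurd rfl hes
  | cons e es ih => match vs, hw with
    | u :: w :: vs, ⟨he, hw⟩ =>
      rcases List.mem_cons.1 hv with rfl | hv
      · exact ⟨e, List.mem_cons_self, by simp [he]⟩
      rcases List.mem_cons.1 hv with rfl | hv
      · exact ⟨e, List.mem_cons_self, by simp [he]⟩
      cases es with
      | nil => match vs, hw with | [], _ => exact absurd hv List.not_mem_nil
      | cons e' es =>
        obtain ⟨e'', he'', hv''⟩ := ih hw (List.cons_ne_nil _ _) (List.mem_cons_of_mem _ hv)
        exact ⟨e'', List.mem_cons_of_mem _ he'', hv''⟩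

theorem IsWalk.restrictE {Q : G.E → Prop} [DecidablePred Q] {vs : List G.V} {es : List G.E}
    (hw : G.IsWalk vs es) (hQ : ∀ e ∈ es, Q e) :
    (G.restrictE Q).IsWalk vs (es.pmap Subtype.mk hQ) := by
  induction es generalizing vs with
  | nil => match vs, hw with
    | [_], _ => trivial
  | cons e es ih => match vs, hw with
    | u :: v :: vs, ⟨he, hw⟩ => exact ⟨he, ih hw _⟩

end Multigraph

open Multigraph

namespace TPath

variable {G : Multigraph} {lam : G.E → ℕ} {s z : G.V}

theorem isWalk (P : TPath G lam s z) : G.IsWalk P.verts P.edges :=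
  isWalk_iff.2 ⟨P.len_eq, fun i hi => by simpa using P.ends_eq i hi⟩

theorem pairwise_le (P : TPath G lam s z) : P.edges.Pairwise (fun e f => lam e ≤ lam f) :=
  List.pairwise_map.1 (List.isChain_iff_pairwise.1 P.mono)

def ofWalk (vs : List G.V) (es : List G.E) (hw : G.IsWalk vs es) (hs : vs.head? = some s)
    (hz : vs.getLast? = some z) (hnd : vs.Nodup) (hle : es.Pairwise (fun e f => lam e ≤ lam f)) :
    TPath G lam s z where
  verts := vs
  edges := es
  len_eq := (isWalk_iff.1 hw).1
  head_eq := hs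
  last_eq := hz
  nodup := hnd
  ends_eq i hi := by simpa using (isWalk_iff.1 hw).2 i hi
  mono := List.isChain_iff_pairwise.2 (List.pairwise_map.2 hle)

def copy (P : TPath G lam s z) {s' z' : G.V} (hs : s = s') (hz : z = z') : TPath G lam s' z' :=
  hs ▸ hz ▸ P

@[simp] theorem times_copy (P : TPath G lam s z) {s' z' : G.V} (hs : s = s') (hz : z = z') :
    (P.copy hs hz).times = P.times := by
  subst hs hz; rfl

theorem edges_ne_nil (P : TPath G lam s z) (hsz : s ≠ z) : P.edges ≠ [] := by
  intro h
  obtain ⟨v, hv⟩ := List.length_eq_one_iff.1 (h ▸ P.len_eq)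
  have hs := P.head_eq
  have hz := P.last_eq
  simp only [hv, List.head?_cons, List.getLast?_singleton, Option.some.injEq] at hs hz
  exact hsz (hs.symm.trans hz)

theorem nodup_edges (P : TPath G lam s z) : P.edges.Nodup :=
  P.isWalk.nodup_edges P.nodup

theorem mem_ends_head (P : TPath G lam s z) (h : P.edges ≠ []) : s ∈ G.ends (P.edges.head h) := by
  have hv : P.verts[0]'(by simp [P.len_eq]) = s := by
    have := P.head_eq
    rw [List.head?_eq_getElem?, List.getElem?_eq_getElem (by simp [P.len_eq])] at this
    exact Option.some_inj.1 this
  have := P.ends_eq 0 (List.length_pos_iff.2 h)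
  simp only [List.get_eq_getElem, hv] at this
  simp [List.head_eq_getElem, this]

theorem mem_ends_getLast (P : TPath G lam s z) (h : P.edges ≠ []) :
    z ∈ G.ends (P.edges.getLast h) := by
  have hpos := List.length_pos_iff.2 h
  have hv : P.verts[P.edges.length - 1 + 1]'(by simp [P.len_eq]; omega) = z := by
    have := P.last_eq
    rw [List.getLast?_eq_getElem?] at this
    simpa [P.len_eq, Nat.sub_add_cancel hpos] using this
  have := P.ends_eq (P.edges.length - 1) (by omega)
  simp only [List.get_eq_getElem, hv] at this
  simp [List.getLast_eq_getElem, this]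

def map {B : Multigraph} {lamB : B.E → ℕ} (f : G.Hom B) (hlam : ∀ e, lamB (f.onE e) = lam e)
    (P : TPath G lam s z) (hinj : Set.InjOn f.onV {v | v ∈ P.verts}) :
    TPath B lamB (f.onV s) (f.onV z) :=
  ofWalk (P.verts.map f.onV) (P.edges.map f.onE) (P.isWalk.map f)
    (by simp [P.head_eq]) (by simp [P.last_eq]) (P.nodup.map_on hinj)
    (List.pairwise_map.2 (by simpa only [hlam] using P.pairwise_le))

@[simp] theorem times_map {B : Multigraph} {lamB : B.E → ℕ} (f : G.Hom B)
    (hlam : ∀ e, lamB (f.onE e) = lam e) (P : TPath G lam s z)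
    (hinj : Set.InjOn f.onV {v | v ∈ P.verts}) : (P.map f hlam hinj).times = P.times := by
  ext t
  simp [map, ofWalk, times, hlam]

def restrict {Q : G.E → Prop} [DecidablePred Q] {lamQ : (G.restrictE Q).E → ℕ}
    (hlam : ∀ e, lamQ e = lam e.1) (P : TPath G lam s z) (hQ : ∀ e ∈ P.edges, Q e) :
    TPath (G.restrictE Q) lamQ s z :=
  ofWalk P.verts (P.edges.pmap Subtype.mk hQ) (P.isWalk.restrictE hQ) P.head_eq P.last_eq P.nodup
    ((List.pairwise_pmap hQ).2 (P.pairwise_le.imp fun h _ _ => by rw [hlam, hlam]; exact h))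

@[simp] theorem times_restrict {Q : G.E → Prop} [DecidablePred Q] {lamQ : (G.restrictE Q).E → ℕ}
    (hlam : ∀ e, lamQ e = lam e.1) (P : TPath G lam s z) (hQ : ∀ e ∈ P.edges, Q e) :
    (P.restrict hlam hQ).times = P.times := by
  ext t
  simp only [restrict, ofWalk, times, List.mem_pmap, hlam, Set.mem_ofPred_eq]
  exact ⟨fun ⟨_, ⟨a, ha, rfl⟩, h⟩ => ⟨a, ha, h⟩, fun ⟨a, ha, h⟩ => ⟨_, ⟨a, ha, rfl⟩, h⟩⟩

def retime (P : TPath G lam s z) {lam' : G.E → ℕ} (h : ∀ e f, lam e ≤ lam f → lam' e ≤ lam' f) :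
    TPath G lam' s z :=
  ofWalk P.verts P.edges P.isWalk P.head_eq P.last_eq P.nodup (P.pairwise_le.imp (h _ _))

end TPath

section Duality

variable {G : Multigraph} {lam : G.E → ℕ} {s z : G.V}

theorem isSnapCut_iff {S : Set ℕ} :
    IsSnapCut G lam s z S ↔ ∀ P : TPath G lam s z, ∃ t ∈ P.times, t ∈ S :=
  forall_congr' fun _ => ⟨fun ⟨e, he, heS⟩ => ⟨_, ⟨e, he, rfl⟩, heS⟩,
    fun ⟨_, ⟨e, he, rfl⟩, heS⟩ => ⟨e, he, heS⟩⟩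

theorem isSnapCut_image_univ (hsz : s ≠ z) : IsSnapCut G lam s z ↑(Finset.univ.image lam) :=
  fun P => ⟨_, List.head_mem (P.edges_ne_nil hsz), by simp⟩

theorem card_le_card_of_isSnapCut {ι : Type*} [Fintype ι] (f : ι → TPath G lam s z)
    (hf : ∀ i j, i ≠ j → SnapDisjoint (f i) (f j)) {S : Finset ℕ}
    (hS : IsSnapCut G lam s z ↑S) : Fintype.card ι ≤ S.card := by
  choose e he heS using fun i => hS (f i)
  have hinj : Function.Injective fun i => (⟨lam (e i), heS i⟩ : S) := by
    intro i j hij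
    by_contra hne
    refine (Set.eq_empty_iff_forall_notMem.1 (hf i j hne)) (lam (e i)) ⟨⟨e i, he i, rfl⟩, ?_⟩
    exact ⟨e j, he j, (congrArg Subtype.val hij).symm⟩
  simpa using Fintype.card_le_of_injective _ hinj

theorem bddAbove_maxD_set (hsz : s ≠ z) :
    BddAbove {k | ∃ f : Fin k → TPath G lam s z, ∀ i j, i ≠ j → SnapDisjoint (f i) (f j)} :=
  ⟨_, fun k ⟨f, hf⟩ => by simpa using card_le_card_of_isSnapCut f hf (isSnapCut_image_univ hsz)⟩

theorem card_le_maxD (hsz : s ≠ z) {ι : Type*} [Fintype ι] (f : ι → TPath G lam s z)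
    (hf : ∀ i j, i ≠ j → SnapDisjoint (f i) (f j)) : Fintype.card ι ≤ maxD G lam s z :=
  le_csSup (bddAbove_maxD_set hsz) ⟨f ∘ (Fintype.equivFin ι).symm,
    fun _ _ hij => hf _ _ ((Fintype.equivFin ι).symm.injective.ne hij)⟩

theorem exists_snapDisjoint_family_maxD (hsz : s ≠ z) :
    ∃ f : Fin (maxD G lam s z) → TPath G lam s z, ∀ i j, i ≠ j → SnapDisjoint (f i) (f j) :=
  have hne :
      {k | ∃ f : Fin k → TPath G lam s z, ∀ i j, i ≠ j → SnapDisjoint (f i) (f j)}.Nonempty :=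
    ⟨0, Fin.elim0, fun i => i.elim0⟩
  Nat.sSup_mem hne (bddAbove_maxD_set hsz)

theorem minC_le_card {S : Finset ℕ} (hS : IsSnapCut G lam s z ↑S) : minC G lam s z ≤ S.card :=
  Nat.sInf_le ⟨S, rfl, hS⟩

theorem exists_isSnapCut_card_minC (hsz : s ≠ z) :
    ∃ S : Finset ℕ, S.card = minC G lam s z ∧ IsSnapCut G lam s z ↑S :=
  have hne : {h | ∃ S : Finset ℕ, S.card = h ∧ IsSnapCut G lam s z ↑S}.Nonempty :=
    ⟨_, _, rfl, isSnapCut_image_univ hsz⟩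
  Nat.sInf_mem hne

theorem maxD_le_minC (hsz : s ≠ z) : maxD G lam s z ≤ minC G lam s z := by
  obtain ⟨f, hf⟩ := exists_snapDisjoint_family_maxD (lam := lam) hsz
  obtain ⟨S, hcard, hS⟩ := exists_isSnapCut_card_minC (lam := lam) hsz
  simpa [hcard] using card_le_card_of_isSnapCut f hf hS

end Duality

section Transfer

variable {G₁ G₂ : Multigraph} {lam₁ : G₁.E → ℕ} {lam₂ : G₂.E → ℕ} {s₁ z₁ : G₁.V} {s₂ z₂ : G₂.V}

def PathTransfer (G₁ : Multigraph) (lam₁ : G₁.E → ℕ) (s₁ z₁ : G₁.V)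
    (G₂ : Multigraph) (lam₂ : G₂.E → ℕ) (s₂ z₂ : G₂.V) : Prop :=
  ∃ (Φ : TPath G₁ lam₁ s₁ z₁ → TPath G₂ lam₂ s₂ z₂) (ρ : ℕ → ℕ),
    ∀ P, ∀ t ∈ (Φ P).times, ρ t ∈ P.times

theorem PathTransfer.of_times_subset (Φ : TPath G₁ lam₁ s₁ z₁ → TPath G₂ lam₂ s₂ z₂)
    (hΦ : ∀ P, (Φ P).times ⊆ P.times) : PathTransfer G₁ lam₁ s₁ z₁ G₂ lam₂ s₂ z₂ :=
  ⟨Φ, id, hΦ⟩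

theorem PathTransfer.maxD_le (h : PathTransfer G₁ lam₁ s₁ z₁ G₂ lam₂ s₂ z₂)
    (hsz₁ : s₁ ≠ z₁) (hsz₂ : s₂ ≠ z₂) : maxD G₁ lam₁ s₁ z₁ ≤ maxD G₂ lam₂ s₂ z₂ := by
  obtain ⟨Φ, ρ, hΦ⟩ := h
  obtain ⟨f, hf⟩ := exists_snapDisjoint_family_maxD (lam := lam₁) hsz₁
  refine (Fintype.card_fin _).symm.le.trans (card_le_maxD hsz₂ (Φ ∘ f) fun i j hij => ?_)
  refine Set.eq_empty_iff_forall_notMem.2 fun t ⟨hi, hj⟩ => ?_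
  exact (Set.eq_empty_iff_forall_notMem.1 (hf i j hij)) (ρ t) ⟨hΦ _ t hi, hΦ _ t hj⟩

theorem PathTransfer.minC_le (h : PathTransfer G₁ lam₁ s₁ z₁ G₂ lam₂ s₂ z₂)
    (hsz₂ : s₂ ≠ z₂) : minC G₁ lam₁ s₁ z₁ ≤ minC G₂ lam₂ s₂ z₂ := by
  obtain ⟨Φ, ρ, hΦ⟩ := h
  obtain ⟨S, hcard, hS⟩ := exists_isSnapCut_card_minC (lam := lam₂) hsz₂
  refine (minC_le_card (S := S.image ρ) fun P => ?_).trans (hcard ▸ Finset.card_image_le)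
  obtain ⟨e, he, heS⟩ := hS (Φ P)
  obtain ⟨e', he', hρ⟩ := hΦ P _ ⟨e, he, rfl⟩
  exact ⟨e', he', by simpa [hρ] using ⟨_, heS, rfl⟩⟩

theorem PathTransfer.maxD_eq_minC (h₁₂ : PathTransfer G₁ lam₁ s₁ z₁ G₂ lam₂ s₂ z₂)
    (h₂₁ : PathTransfer G₂ lam₂ s₂ z₂ G₁ lam₁ s₁ z₁) (hsz₁ : s₁ ≠ z₁) (hsz₂ : s₂ ≠ z₂)
    (h : maxD G₂ lam₂ s₂ z₂ = minC G₂ lam₂ s₂ z₂) : maxD G₁ lam₁ s₁ z₁ = minC G₁ lam₁ s₁ z₁ :=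
  (maxD_le_minC hsz₁).antisymm <|
    (h₁₂.minC_le hsz₂).trans (h ▸ h₂₁.maxD_le hsz₂ hsz₁)

end Transfer

theorem maxD_eq_minC_of_strictMono_comp {G : Multigraph} {lam : G.E → ℕ} {s z : G.V}
    {θ : ℕ → ℕ} (hθ : StrictMono θ) (hsz : s ≠ z)
    (h : maxD G (θ ∘ lam) s z = minC G (θ ∘ lam) s z) : maxD G lam s z = minC G lam s z := by
  refine PathTransfer.maxD_eq_minC ⟨fun P => P.retime fun _ _ => (hθ.monotone ·),
    Function.invFun θ, ?_⟩ ⟨fun P => P.retime fun _ _ => hθ.le_iff_le.1, θ, ?_⟩ hsz hsz h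
  · rintro P _ ⟨e, he, rfl⟩
    exact ⟨e, he, (Function.leftInverse_invFun hθ.injective _).symm⟩
  · rintro P _ ⟨e, he, rfl⟩
    exact ⟨e, he, rfl⟩

theorem Mengerian.of_embedding {K G : Multigraph} (fv : K.V → G.V) (fe : K.E → G.E)
    (hfv : Function.Injective fv) (hfe : Function.Bijective fe)
    (hends : ∀ e, G.ends (fe e) = (K.ends e).map fv) (hG : Mengerian G) : Mengerian K := by
  intro lam hproper s z hsz
  have : Nonempty K.V := ⟨s⟩
  let fe' := Equiv.ofBijective fe hfe
  let f : K.Hom G := ⟨fv, fe, hends⟩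
  have hends' : ∀ ε, G.ends ε = (K.ends (fe'.symm ε)).map fv := fun ε => by
    rw [← hends]; exact congrArg G.ends (fe'.apply_symm_apply ε).symm
  let g : G.Hom K := ⟨Function.invFun fv, fe'.symm, fun ε => by
    rw [hends', Sym2.map_map, Function.invFun_comp hfv, Sym2.map_id, id]⟩
  have hproperG : ProperTime G (lam ∘ fe'.symm) :=
    ⟨fun _ => hproper.1 _, fun ε ε' hne hpar => hproper.2 _ _ (fe'.symm.injective.ne hne)
      (Sym2.map.injective hfv (by rwa [← hends', ← hends']))⟩
  have hrange : ∀ P : TPath G (lam ∘ fe'.symm) (fv s) (fv z), {v | v ∈ P.verts} ⊆ Set.range fv :=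
    fun P v hv => by
      obtain ⟨ε, -, hε⟩ := P.isWalk.exists_mem_ends (P.edges_ne_nil (hfv.ne hsz)) hv
      obtain ⟨u, -, rfl⟩ := Sym2.mem_map.1 (hends' ε ▸ hε)
      exact ⟨u, rfl⟩
  have hinvFun := Function.leftInverse_invFun hfv
  have hinjOn : Set.InjOn (Function.invFun fv) (Set.range fv) := by
    rintro _ ⟨a, rfl⟩ _ ⟨b, rfl⟩ h
    rw [hinvFun, hinvFun] at h
    rw [h]
  refine PathTransfer.maxD_eq_minC
    (PathTransfer.of_times_subset
      (fun P => P.map f (fun e => congrArg lam (fe'.symm_apply_apply e)) hfv.injOn)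
      fun P => (P.times_map ..).subset)
    (PathTransfer.of_times_subset
      (fun P => (P.map g (fun _ => rfl) (hinjOn.mono (hrange P))).copy
        (hinvFun s) (hinvFun z))
      fun P => by simp)
    hsz (hfv.ne hsz) (hG _ hproperG _ _ (hfv.ne hsz))

section EdgeDeletion

variable {A : Multigraph} {lam : A.E → ℕ} {s z : A.V}

theorem TPath.notMem_edges_of_forall_lt (P : TPath A lam s z) {e₀ : A.E}
    (hlt : ∀ e ≠ e₀, lam e < lam e₀) (hz : z ∉ A.ends e₀) : e₀ ∉ P.edges := by
  intro he₀
  obtain ⟨l₁, l₂, hl⟩ := List.append_of_mem he₀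
  have hle := P.pairwise_le
  have hnd := P.nodup_edges
  rw [hl, List.pairwise_append, List.pairwise_cons] at hle
  rw [hl, List.nodup_append, List.nodup_cons] at hnd
  obtain rfl : l₂ = [] := List.eq_nil_iff_forall_not_mem.2 fun e he =>
    (hlt e (ne_of_mem_of_not_mem he hnd.2.1.1)).not_ge (hle.2.1.1 e he)
  exact hz (by simpa [hl] using P.mem_ends_getLast (by simp [hl]))

theorem TPath.notMem_edges_of_forall_gt (P : TPath A lam s z) {e₀ : A.E}
    (hgt : ∀ e ≠ e₀, lam e₀ < lam e) (hs : s ∉ A.ends e₀) : e₀ ∉ P.edges := by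
  intro he₀
  obtain ⟨l₁, l₂, hl⟩ := List.append_of_mem he₀
  have hle := P.pairwise_le
  have hnd := P.nodup_edges
  rw [hl, List.pairwise_append] at hle
  rw [hl, List.nodup_append] at hnd
  obtain rfl : l₁ = [] := List.eq_nil_iff_forall_not_mem.2 fun e he =>
    (hgt e (hnd.2.2 e he e₀ List.mem_cons_self)).not_ge (hle.2.2 e he e₀ List.mem_cons_self)
  exact hs (by simpa [hl] using P.mem_ends_head (by simp [hl]))

theorem maxD_eq_minC_restrictE_of_forall_mem_edges {Q : A.E → Prop} [DecidablePred Q]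
    {lamQ : (A.restrictE Q).E → ℕ} (hlam : ∀ e, lamQ e = lam e.1)
    (hQ : ∀ P : TPath A lam s z, ∀ e ∈ P.edges, Q e) (hsz : s ≠ z)
    (h : maxD A lam s z = minC A lam s z) :
    maxD (A.restrictE Q) lamQ s z = minC (A.restrictE Q) lamQ s z :=
  PathTransfer.maxD_eq_minC
    (PathTransfer.of_times_subset
      (fun P => P.map (A.inclusion Q) (fun e => (hlam e).symm) (Set.injOn_id _))
      fun P => (P.times_map ..).subset)
    (PathTransfer.of_times_subset (fun P => P.restrict hlam (hQ P))
      fun P => (P.times_restrict ..).subset)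
    hsz hsz h

theorem maxD_le_maxD_restrictE_ne_add_one {e₀ : A.E} {lam' : (A.restrictE (· ≠ e₀)).E → ℕ}
    (hlam : ∀ e, lam' e = lam e.1) (hsz : s ≠ z) :
    maxD A lam s z ≤ maxD (A.restrictE (· ≠ e₀)) lam' s z + 1 := by
  obtain ⟨f, hf⟩ := exists_snapDisjoint_family_maxD (lam := lam) hsz
  have hthrough : Fintype.card {i // ¬ e₀ ∉ (f i).edges} ≤ 1 :=
    Fintype.card_le_one_iff.2 fun i j => by
      by_contra hij
      refine (Set.eq_empty_iff_forall_notMem.1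
        (hf i j (Subtype.coe_injective.ne hij))) (lam e₀) ⟨?_, ?_⟩
      · exact ⟨e₀, not_not.1 i.2, rfl⟩
      · exact ⟨e₀, not_not.1 j.2, rfl⟩
  have havoid := card_le_maxD (G := A.restrictE (· ≠ e₀)) hsz
    (fun i : {i // e₀ ∉ (f i).edges} => (f i.1).restrict hlam fun e he h => i.2 (h ▸ he))
    fun i j hij => by
      simpa [SnapDisjoint] using hf i j (Subtype.coe_injective.ne hij)
  have := Fintype.card_subtype_compl (fun i => e₀ ∉ (f i).edges)
  simp only [Fintype.card_fin] at this
  omega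

theorem minC_restrictE_ne_add_one_le {e₀ : A.E} (he₀ : A.ends e₀ = s(s, z))
    {lam' : (A.restrictE (· ≠ e₀)).E → ℕ} (hlam : ∀ e, lam' e = lam e.1)
    (hfresh : ∀ e ≠ e₀, lam e ≠ lam e₀) (hsz : s ≠ z) :
    minC (A.restrictE (· ≠ e₀)) lam' s z + 1 ≤ minC A lam s z := by
  obtain ⟨S, hcard, hS⟩ := exists_isSnapCut_card_minC (lam := lam) hsz
  have hTS : lam e₀ ∈ S := by
    obtain ⟨e, he, heS⟩ := hS (TPath.ofWalk [s, z] [e₀] ⟨he₀, trivial⟩ rfl rfl (by simp [hsz])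
      (List.pairwise_singleton _ _))
    rwa [List.mem_singleton.1 he] at heS
  have hcut : IsSnapCut (A.restrictE (· ≠ e₀)) lam' s z ↑(S.erase (lam e₀)) := by
    refine isSnapCut_iff.2 fun P => ?_
    obtain ⟨t, ht, htS⟩ := isSnapCut_iff.1 hS
      (P.map (A.inclusion _) (fun e => (hlam e).symm) (Set.injOn_id _))
    rw [TPath.times_map] at ht
    obtain ⟨e, he, rfl⟩ := ht
    exact ⟨_, ⟨e, he, rfl⟩, Finset.mem_erase.2 ⟨by rw [hlam]; exact hfresh e.1 e.2, htS⟩⟩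
  have := minC_le_card hcut
  rw [Finset.card_erase_of_mem hTS, hcard] at this
  have := Finset.card_pos.2 ⟨_, hTS⟩
  omega

theorem maxD_eq_minC_restrictE_ne_of_ends_eq {e₀ : A.E} (he₀ : A.ends e₀ = s(s, z))
    {lam' : (A.restrictE (· ≠ e₀)).E → ℕ} (hlam : ∀ e, lam' e = lam e.1)
    (hfresh : ∀ e ≠ e₀, lam e ≠ lam e₀) (hsz : s ≠ z) (h : maxD A lam s z = minC A lam s z) :
    maxD (A.restrictE (· ≠ e₀)) lam' s z = minC (A.restrictE (· ≠ e₀)) lam' s z := by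
  have := maxD_le_maxD_restrictE_ne_add_one (e₀ := e₀) hlam hsz
  have := minC_restrictE_ne_add_one_le he₀ hlam hfresh hsz
  have := maxD_le_minC (G := A.restrictE (· ≠ e₀)) (lam := lam') hsz
  omega

end EdgeDeletion

def extendTime {A : Multigraph} (e₀ : A.E) (t₀ : ℕ) (lam : (A.restrictE (· ≠ e₀)).E → ℕ) :
    A.E → ℕ :=
  fun e => if h : e = e₀ then t₀ else lam ⟨e, h⟩

section ExtendTime

variable {A : Multigraph} {e₀ : A.E} {t₀ : ℕ} {lam : (A.restrictE (· ≠ e₀)).E → ℕ}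

@[simp] theorem extendTime_self : extendTime e₀ t₀ lam e₀ = t₀ := dif_pos rfl

theorem extendTime_of_ne {e : A.E} (he : e ≠ e₀) : extendTime e₀ t₀ lam e = lam ⟨e, he⟩ :=
  dif_neg he

theorem extendTime_val (e : (A.restrictE (· ≠ e₀)).E) : lam e = extendTime e₀ t₀ lam e.1 :=
  (extendTime_of_ne e.2).symm

theorem properTime_extendTime (hlam : ProperTime (A.restrictE (· ≠ e₀)) lam) (ht₀ : 0 < t₀)
    (hfresh : ∀ e, lam e ≠ t₀) : ProperTime A (extendTime e₀ t₀ lam) := by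
  refine ⟨fun e => ?_, fun e f hef hpar => ?_⟩
  · by_cases he : e = e₀
    · rwa [he, extendTime_self]
    · rw [extendTime_of_ne he]; exact hlam.1 _
  · by_cases he : e = e₀
    · subst he
      rw [extendTime_self, extendTime_of_ne hef.symm]; exact (hfresh _).symm
    by_cases hf : f = e₀
    · subst hf
      rw [extendTime_self, extendTime_of_ne hef]; exact hfresh _
    rw [extendTime_of_ne he, extendTime_of_ne hf]
    exact hlam.2 _ _ (fun h => hef (congrArg Subtype.val h)) hpar

end ExtendTime

theorem Mengerian.restrictE_ne {A : Multigraph} (hA : Mengerian A) (e₀ : A.E) :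
    Mengerian (A.restrictE (· ≠ e₀)) := by
  intro lam hproper s z hsz
  set M := Finset.univ.sup lam + 1
  have hM : ∀ e, lam e < M := fun e => Nat.lt_succ_of_le (Finset.le_sup (Finset.mem_univ e))
  have hproperM := properTime_extendTime (t₀ := M) hproper (Nat.succ_pos _) fun e => (hM e).ne
  have hltM : ∀ e ≠ e₀, extendTime e₀ M lam e < extendTime e₀ M lam e₀ := fun e he => by
    rw [extendTime_self, extendTime_of_ne he]; exact hM _
  by_cases hz : z ∈ A.ends e₀
  · by_cases hs : s ∈ A.ends e₀
    · exact maxD_eq_minC_restrictE_ne_of_ends_eq (lam := extendTime e₀ M lam)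
        ((Sym2.mem_and_mem_iff hsz).1 ⟨hs, hz⟩)
        extendTime_val (fun e he => (hltM e he).ne) hsz (hA _ hproperM s z hsz)
    refine maxD_eq_minC_of_strictMono_comp (θ := (· + 1)) add_left_strictMono hsz ?_
    have hgt : ∀ e ≠ e₀,
        extendTime e₀ 1 ((· + 1) ∘ lam) e₀ < extendTime e₀ 1 ((· + 1) ∘ lam) e := fun e he => by
      rw [extendTime_self, extendTime_of_ne he]; simpa using hproper.1 ⟨e, he⟩
    have hproper₁ : ProperTime A (extendTime e₀ 1 ((· + 1) ∘ lam)) := properTime_extendTime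
      ⟨fun _ => Nat.succ_pos _, fun e f hef hpar => by simpa using hproper.2 e f hef hpar⟩
      one_pos fun e => by simpa using (hproper.1 e).ne'
    exact maxD_eq_minC_restrictE_of_forall_mem_edges (lam := extendTime e₀ 1 ((· + 1) ∘ lam))
      extendTime_val
      (fun P e he he₀ => P.notMem_edges_of_forall_gt hgt hs (he₀ ▸ he)) hsz
      (hA _ hproper₁ s z hsz)
  · exact maxD_eq_minC_restrictE_of_forall_mem_edges (lam := extendTime e₀ M lam) extendTime_val
      (fun P e he he₀ => P.notMem_edges_of_forall_lt hltM hz (he₀ ▸ he)) hsz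
      (hA _ hproperM s z hsz)

theorem Mengerian.of_isSubgraph {K G : Multigraph} (hsub : IsSubgraph K G) (hG : Mengerian G) :
    Mengerian K := by
  obtain ⟨fv, fe, hfv, hfe, hends⟩ := hsub
  obtain ⟨n, hn⟩ := Nat.exists_eq_add_of_le (Fintype.card_le_of_injective fe hfe)
  induction n generalizing G with
  | zero =>
    exact hG.of_embedding fv fe hfv
      ((Fintype.bijective_iff_injective_and_card fe).2 ⟨hfe, hn.symm⟩) hends
  | succ n ih =>
    obtain ⟨e₀, he₀⟩ : ∃ e₀, e₀ ∉ Set.range fe := by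
      by_contra! h
      have := Fintype.card_le_of_surjective fe h
      omega
    refine ih (hG.restrictE_ne e₀) fv (fun e => ⟨fe e, fun h => he₀ ⟨e, h⟩⟩) hfv
      (fun a b h => hfe (congrArg Subtype.val h)) hends ?_
    simp [Fintype.card_subtype_compl, hn]

namespace Multigraph

variable {A : Multigraph} {x y : A.V}

def msubdivProj (x y : A.V) : (A.msubdiv x y).E → A.E
  | .inl e => e.1
  | .inr (e, _) => e.1

theorem ends_msubdivProj_of_ends_eq_some {ε : (A.msubdiv x y).E} {u w : A.V}
    (h : (A.msubdiv x y).ends ε = s(some u, some w)) : A.ends (msubdivProj x y ε) = s(u, w) := by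
  match ε, h with
  | .inl _, h => exact Sym2.map.injective (Option.some_injective _) (by simpa [msubdivProj] using h)
  | .inr (_, true), h | .inr (_, false), h => simp at h

theorem ends_msubdivProj_of_ends_eq_none {ε : (A.msubdiv x y).E} {u : A.V}
    (h : (A.msubdiv x y).ends ε = s(some u, none)) :
    A.ends (msubdivProj x y ε) = s(x, y) ∧ u ∈ s(x, y) := by
  have hu : some u ∈ (A.msubdiv x y).ends ε := h ▸ Sym2.mem_mk_left _ _
  have hnone : none ∈ (A.msubdiv x y).ends ε := h ▸ Sym2.mem_mk_right _ _
  match ε, hu, hnone with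
  | .inl _, _, hnone => simp at hnone
  | .inr (⟨_, he⟩, true), hu, _ | .inr (⟨_, he⟩, false), hu, _ => exact ⟨he, by simp_all⟩

theorem properTime_msubdiv {lam : A.E → ℕ} (h : ProperTime A lam) :
    ProperTime (A.msubdiv x y) (lam ∘ msubdivProj x y) := by
  refine ⟨fun _ => h.1 _, fun ε ε' hne hpar => ?_⟩
  suffices msubdivProj x y ε ≠ msubdivProj x y ε' ∧
      A.ends (msubdivProj x y ε) = A.ends (msubdivProj x y ε') from h.2 _ _ this.1 this.2
  match ε, ε', hne, hpar with
  | .inl e, .inl f, hne, hpar =>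
    exact ⟨fun h => hne (congrArg _ (Subtype.ext h)),
      Sym2.map.injective (Option.some_injective _) hpar⟩
  | .inl e, .inr (_, b), _, hpar =>
    have : none ∈ (A.msubdiv x y).ends (.inl e) := hpar ▸ (by cases b <;> simp)
    simp at this
  | .inr (_, b), .inl e, _, hpar =>
    have : none ∈ (A.msubdiv x y).ends (.inl e) := hpar ▸ (by cases b <;> simp)
    simp at this
  | .inr (e, b), .inr (f, b'), hne, hpar =>
    refine ⟨fun h => ?_, e.2.trans f.2.symm⟩
    obtain rfl : e = f := Subtype.ext h
    have hxy : x ≠ y := fun hxy => A.loopless e.1 (by simp [e.2, hxy])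
    cases b <;> cases b' <;> simp_all

def spliceVerts (x y : A.V) : List A.V → List A.E → List (Option A.V)
  | u :: vs, e :: es =>
    if A.ends e = s(x, y) then some u :: none :: spliceVerts x y vs es
    else some u :: spliceVerts x y vs es
  | vs, _ => vs.map some

def spliceEdges (x y : A.V) : List A.V → List A.E → List (A.msubdiv x y).E
  | u :: vs, e :: es =>
    if h : A.ends e = s(x, y) then
      .inr (⟨e, h⟩, decide (u = x)) :: .inr (⟨e, h⟩, !decide (u = x)) :: spliceEdges x y vs es
    else .inl ⟨e, h⟩ :: spliceEdges x y vs es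
  | _, _ => []

@[simp] theorem spliceVerts_nil (vs : List A.V) : spliceVerts x y vs [] = vs.map some := by
  cases vs <;> rfl

theorem spliceVerts_cons (u : A.V) (vs : List A.V) (es : List A.E) :
    ∃ l, spliceVerts x y (u :: vs) es = some u :: l := by
  cases es with
  | nil => exact ⟨_, rfl⟩
  | cons e es => unfold spliceVerts; split <;> exact ⟨_, rfl⟩

theorem IsWalk.splice {vs : List A.V} {es : List A.E} (hw : A.IsWalk vs es) :
    (A.msubdiv x y).IsWalk (spliceVerts x y vs es) (spliceEdges x y vs es) := by
  induction es generalizing vs with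
  | nil => match vs, hw with
    | [_], _ => trivial
  | cons e es ih => match vs, hw with
    | u :: v :: vs, ⟨he, hw⟩ =>
      obtain ⟨l, hl⟩ := spliceVerts_cons (x := x) (y := y) v vs es
      have ih := ih hw
      rw [hl] at ih
      unfold spliceVerts spliceEdges
      rw [hl]
      split_ifs with hxy
      · have huv := he.symm.trans hxy
        by_cases hux : u = x
        · subst hux
          refine ⟨?_, ?_, ih⟩ <;> simp [Sym2.congr_right.1 huv]
        · obtain ⟨rfl, rfl⟩ := (Sym2.eq_iff.1 huv).resolve_left fun h => hux h.1
          refine ⟨?_, ?_, ih⟩ <;> simp [hux, Sym2.eq_swap]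
      · exact ⟨by simp [he], ih⟩

theorem head?_spliceVerts (vs : List A.V) (es : List A.E) :
    (spliceVerts x y vs es).head? = vs.head?.map some := by
  cases vs with
  | nil => cases es <;> rfl
  | cons u vs => obtain ⟨l, hl⟩ := spliceVerts_cons (x := x) (y := y) u vs es; simp [hl]

theorem getLast?_spliceVerts {vs : List A.V} {es : List A.E} (hw : A.IsWalk vs es) :
    (spliceVerts x y vs es).getLast? = vs.getLast?.map some := by
  induction es generalizing vs with
  | nil => simp
  | cons e es ih => match vs, hw with
    | u :: v :: vs, ⟨_, hw⟩ =>
      obtain ⟨l, hl⟩ := spliceVerts_cons (x := x) (y := y) v vs es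
      have ih := ih hw
      unfold spliceVerts
      rw [hl] at ih ⊢
      split_ifs <;> simp [List.getLast?_cons_cons, ih]

theorem mem_of_some_mem_spliceVerts {vs : List A.V} {es : List A.E} {u : A.V}
    (h : some u ∈ spliceVerts x y vs es) : u ∈ vs := by
  induction es generalizing vs with
  | nil => simpa using h
  | cons e es ih =>
    cases vs with
    | nil => simp [spliceVerts] at h
    | cons v vs =>
      unfold spliceVerts at h
      split_ifs at h
      · rcases h with _ | ⟨_, _ | ⟨_, h⟩⟩
        · exact List.mem_cons_self
        · exact List.mem_cons_of_mem _ (ih h)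
      · rcases h with _ | ⟨_, h⟩
        · exact List.mem_cons_self
        · exact List.mem_cons_of_mem _ (ih h)

theorem exists_of_none_mem_spliceVerts {vs : List A.V} {es : List A.E}
    (h : none ∈ spliceVerts x y vs es) : ∃ e ∈ es, A.ends e = s(x, y) := by
  induction es generalizing vs with
  | nil => simp at h
  | cons e es ih =>
    cases vs with
    | nil => simp [spliceVerts] at h
    | cons v vs =>
      unfold spliceVerts at h
      split_ifs at h with hxy
      · exact ⟨e, List.mem_cons_self, hxy⟩
      · obtain ⟨e', he', h'⟩ := ih (by simpa using h)
        exact ⟨e', List.mem_cons_of_mem _ he', h'⟩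

theorem nodup_spliceVerts {vs : List A.V} {es : List A.E} (hw : A.IsWalk vs es) (hnd : vs.Nodup) :
    (spliceVerts x y vs es).Nodup := by
  induction es generalizing vs with
  | nil => simpa using hnd.map (Option.some_injective _)
  | cons e es ih => match vs, hw with
    | u :: v :: vs, ⟨he, hw⟩ =>
      have hu := (List.nodup_cons.1 hnd).1
      have hsome : some u ∉ spliceVerts x y (v :: vs) es :=
        fun h => hu (mem_of_some_mem_spliceVerts h)
      unfold spliceVerts
      split_ifs with hxy
      · -- a second `x,y`-edge would revisit `u`
        have hnone : none ∉ spliceVerts x y (v :: vs) es := fun h => by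
          obtain ⟨e', he', hxy'⟩ := exists_of_none_mem_spliceVerts h
          exact hu (hw.mem_of_mem_ends he' (hxy' ▸ hxy ▸ he ▸ Sym2.mem_mk_left u v))
        exact List.nodup_cons.2 ⟨by simpa using hsome, List.nodup_cons.2
          ⟨hnone, ih hw (List.nodup_cons.1 hnd).2⟩⟩
      · exact List.nodup_cons.2 ⟨hsome, ih hw (List.nodup_cons.1 hnd).2⟩

theorem msubdivProj_mem_of_mem_spliceEdges {vs : List A.V} {es : List A.E}
    {ε : (A.msubdiv x y).E} (h : ε ∈ spliceEdges x y vs es) : msubdivProj x y ε ∈ es := by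
  induction es generalizing vs with
  | nil => cases vs <;> simp [spliceEdges] at h
  | cons e es ih =>
    cases vs with
    | nil => simp [spliceEdges] at h
    | cons v vs =>
      unfold spliceEdges at h
      split_ifs at h
      · rcases h with _ | ⟨_, _ | ⟨_, h⟩⟩
        · exact List.mem_cons_self
        · exact List.mem_cons_self
        · exact List.mem_cons_of_mem _ (ih h)
      · rcases h with _ | ⟨_, h⟩
        · exact List.mem_cons_self
        · exact List.mem_cons_of_mem _ (ih h)

theorem pairwise_spliceEdges {lam : A.E → ℕ} {vs : List A.V} {es : List A.E}
    (h : es.Pairwise fun e f => lam e ≤ lam f) :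
    (spliceEdges x y vs es).Pairwise
      fun ε ε' => lam (msubdivProj x y ε) ≤ lam (msubdivProj x y ε') := by
  induction es generalizing vs with
  | nil => cases vs <;> simp [spliceEdges]
  | cons e es ih =>
    cases vs with
    | nil => simp [spliceEdges]
    | cons v vs =>
      have he : ∀ ε ∈ spliceEdges x y vs es, lam e ≤ lam (msubdivProj x y ε) :=
        fun ε hε => (List.pairwise_cons.1 h).1 _ (msubdivProj_mem_of_mem_spliceEdges hε)
      have ih := ih (vs := vs) (List.pairwise_cons.1 h).2
      unfold spliceEdges
      split_ifs
      · exact List.pairwise_cons.2 ⟨List.forall_mem_cons.2 ⟨le_rfl, he⟩,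
          List.pairwise_cons.2 ⟨he, ih⟩⟩
      · exact List.pairwise_cons.2 ⟨he, ih⟩

def collapseEdges (x y : A.V) : List (Option A.V) → List (A.msubdiv x y).E → List A.E
  | none :: vs, _ :: es => collapseEdges x y vs es
  | some _ :: vs, ε :: es => msubdivProj x y ε :: collapseEdges x y vs es
  | _, _ => []

theorem collapseEdges_sublist (vs : List (Option A.V)) (es : List (A.msubdiv x y).E) :
    (collapseEdges x y vs es).Sublist (es.map (msubdivProj x y)) := by
  induction es generalizing vs with
  | nil => cases vs <;> simp [collapseEdges]
  | cons ε es ih =>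
    match vs with
    | [] => simp [collapseEdges]
    | none :: vs => exact (ih vs).cons _
    | some _ :: vs => exact (ih vs).cons_cons _

theorem IsWalk.collapse : ∀ {vs : List (Option A.V)} {es : List (A.msubdiv x y).E},
    (A.msubdiv x y).IsWalk vs es → vs.Nodup → vs.head? ≠ some none → vs.getLast? ≠ some none →
    A.IsWalk vs.reduceOption (collapseEdges x y vs es)
  | [some _], [], _, _, _, _ => trivial
  | some u :: some w :: vs, ε :: es, ⟨hε, hw⟩, hnd, _, hl => by
    have ih := hw.collapse (List.nodup_cons.1 hnd).2 (by simp) (by simpa using hl)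
    simp only [List.reduceOption_cons_of_some, collapseEdges] at ih ⊢
    exact ⟨ends_msubdivProj_of_ends_eq_some hε, ih⟩
  | some u :: none :: some w :: vs, ε₁ :: ε₂ :: es, ⟨h₁, h₂, hw⟩, hnd, _, hl => by
    have ih := hw.collapse (List.nodup_cons.1 (List.nodup_cons.1 hnd).2).2 (by simp)
      (by simpa using hl)
    simp only [List.reduceOption_cons_of_some, List.reduceOption_cons_of_none,
      collapseEdges] at ih ⊢
    have huw : u ≠ w := by rintro rfl; simp at hnd
    obtain ⟨hends, hu⟩ := ends_msubdivProj_of_ends_eq_none h₁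
    obtain ⟨-, hw'⟩ := ends_msubdivProj_of_ends_eq_none (h₂.trans Sym2.eq_swap)
    exact ⟨hends.trans ((Sym2.mem_and_mem_iff huw).1 ⟨hu, hw'⟩), ih⟩
  | [none], [], _, _, hh, _ | none :: _ :: _, _ :: _, _, _, hh, _ => absurd rfl hh
  | [some _, none], [_], _, _, _, hl => absurd rfl hl
  | some _ :: none :: none :: _, _ :: _ :: _, _, hnd, _, _ => by simp at hnd
  | [], _, hw, _, _, _ | [_], _ :: _, hw, _, _, _ | _ :: _ :: _, [], hw, _, _, _
  | [some _, none], _ :: _ :: _, ⟨_, hw⟩, _, _, _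
  | some _ :: none :: _ :: _, [_], ⟨_, hw⟩, _, _, _ => hw.elim

end Multigraph

namespace TPath

variable {A : Multigraph} {x y : A.V} {lam : A.E → ℕ} {s z : A.V}

def splice (x y : A.V) (P : TPath A lam s z) :
    TPath (A.msubdiv x y) (lam ∘ msubdivProj x y) (some s) (some z) :=
  ofWalk _ _ P.isWalk.splice (by rw [head?_spliceVerts, P.head_eq]; rfl)
    (by rw [getLast?_spliceVerts P.isWalk, P.last_eq]; rfl) (nodup_spliceVerts P.isWalk P.nodup)
    (pairwise_spliceEdges P.pairwise_le)

theorem times_splice_subset (P : TPath A lam s z) : (P.splice x y).times ⊆ P.times := by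
  rintro _ ⟨ε, hε, rfl⟩
  exact ⟨_, msubdivProj_mem_of_mem_spliceEdges hε, rfl⟩

def collapse (P : TPath (A.msubdiv x y) (lam ∘ msubdivProj x y) (some s) (some z)) :
    TPath A lam s z :=
  ofWalk P.verts.reduceOption (collapseEdges x y P.verts P.edges)
    (P.isWalk.collapse P.nodup (by simp [P.head_eq]) (by simp [P.last_eq]))
    (by obtain ⟨l, hl⟩ := List.head?_eq_some_iff.1 P.head_eq; simp [hl])
    (by
      obtain ⟨l, hl⟩ := List.getLast?_eq_some_iff.1 P.last_eq
      simp [hl, List.reduceOption_append])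
    (P.nodup.filterMap fun _ _ _ ha ha' => (Option.mem_def.1 ha).trans (Option.mem_def.1 ha').symm)
    ((List.pairwise_map (R := fun e f => lam e ≤ lam f)).2 P.pairwise_le |>.sublist
      (collapseEdges_sublist _ _))

theorem times_collapse_subset
    (P : TPath (A.msubdiv x y) (lam ∘ msubdivProj x y) (some s) (some z)) :
    P.collapse.times ⊆ P.times := by
  rintro _ ⟨e, he, rfl⟩
  obtain ⟨ε, hε, rfl⟩ := List.mem_map.1 ((collapseEdges_sublist _ _).subset he)
  exact ⟨ε, hε, rfl⟩

end TPath

theorem Mengerian.of_msubdiv {A : Multigraph} {x y : A.V} (h : Mengerian (A.msubdiv x y)) :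
    Mengerian A := by
  intro lam hproper s z hsz
  have hsz' : some s ≠ some z := (Option.some_injective _).ne hsz
  exact PathTransfer.maxD_eq_minC (.of_times_subset (TPath.splice x y) TPath.times_splice_subset)
    (.of_times_subset TPath.collapse TPath.times_collapse_subset) hsz hsz'
    (h _ (properTime_msubdiv hproper) _ _ hsz')

theorem Mengerian.of_subdivStep {A B : Multigraph} (hAB : SubdivStep A B) (hB : Mengerian B) :
    Mengerian A := by
  obtain ⟨x, y, -, fv, fe, hends⟩ := hAB
  exact (hB.of_embedding fv fe fv.injective fe.bijective hends).of_msubdiv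

theorem Mengerian.of_reflTransGen {H K : Multigraph} (h : Relation.ReflTransGen SubdivStep H K)
    (hK : Mengerian K) : Mengerian H := by
  induction h with
  | refl => exact hK
  | tail _ hstep ih => exact ih (hK.of_subdivStep hstep)

/-- if `H` is not Mengerian for time and `H` is an m-topological minor of `G`,
then `G` is not Mengerian for time. -/
theorem stmt4 (H G : Multigraph) (hH : ¬ Mengerian H) (hminor : IsMTopMinor H G) :
    ¬ Mengerian G := by
  obtain ⟨K, hHK, hKG⟩ := hminor
  exact fun hG => hH ((hG.of_isSubgraph hKG).of_reflTransGen hHK)
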